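/- With the Lagrangian L as in the context, fix 𝒟 ∈ ℝᵐ, suppose K(𝒟) := a + Σ_Γ 𝒟_Γ B_Γ is invertible, and let U := Ū − K(𝒟)⁻¹(N𝒟) be the solution of the critical-point equation ∇_U L(U,𝒟) = 0. Then the value of the Lagrangian at U is L(U,𝒟) = −(1/2) 𝒟 · 𝒜(𝒟)𝒟 + Ū·(M𝒟) + (1/2) Σ_Γ 𝒟_Γ (Ū·B_Γ Ū), where 𝒜(𝒟) := Nᵀ K(𝒟)⁻¹ N ∈ ℝ^{m×m}. -/
import Mathlib


open scoped BigOperators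
open Matrix

/-- The Lagrangian `L(U,𝒟) = U·(M𝒟) + ½ Σ_Γ 𝒟_Γ (U·B_Γ U) + ½ (U−Ū)·a(U−Ū)`. -/
noncomputable def lag {n m : ℕ} (M : Matrix (Fin n) (Fin m) ℝ)
    (B : Fin m → Matrix (Fin n) (Fin n) ℝ) (a : Matrix (Fin n) (Fin n) ℝ)
    (Ub : Fin n → ℝ) (U : Fin n → ℝ) (D : Fin m → ℝ) : ℝ :=
  U ⬝ᵥ (M *ᵥ D) + (1 / 2) * ∑ Γ, D Γ * (U ⬝ᵥ (B Γ *ᵥ U))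
    + (1 / 2) * ((U - Ub) ⬝ᵥ (a *ᵥ (U - Ub)))

lemma sum_smul_mulVec {n m : ℕ} (B : Fin m → Matrix (Fin n) (Fin n) ℝ)
    (D : Fin m → ℝ) (x : Fin n → ℝ) :
    (∑ Γ, D Γ • B Γ) *ᵥ x = ∑ Γ, D Γ • (B Γ *ᵥ x) := by
  ext i
  simp only [Matrix.mulVec, dotProduct, Matrix.sum_apply, Matrix.smul_apply,
    Finset.sum_apply, Pi.smul_apply, smul_eq_mul, Finset.sum_mul]
  rw [Finset.sum_comm]
  simp [Finset.mul_sum, mul_assoc]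

lemma dot_sum {n : ℕ} {ι : Type*} (f : ι → (Fin n → ℝ)) (x : Fin n → ℝ)
    (s : Finset ι) : x ⬝ᵥ (∑ i ∈ s, f i) = ∑ i ∈ s, x ⬝ᵥ f i := by
  simp only [dotProduct, Finset.sum_apply, Finset.mul_sum]
  exact Finset.sum_comm

lemma symm_dot {n : ℕ} {A : Matrix (Fin n) (Fin n) ℝ} (hA : A.IsSymm)
    (x y : Fin n → ℝ) : x ⬝ᵥ (A *ᵥ y) = y ⬝ᵥ (A *ᵥ x) := by
  rw [Matrix.dotProduct_mulVec, ← Matrix.mulVec_transpose, hA, dotProduct_comm]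

/-- With `K(𝒟) := a + Σ_Γ 𝒟_Γ B_Γ` invertible, `N_{IΓ} := M_{IΓ} + (B_Γ Ū)_I`,
and `U := Ū − K(𝒟)⁻¹(N𝒟)` the solution of the critical-point equation,
the value of the Lagrangian at `U` is
`L(U,𝒟) = −½ 𝒟·𝒜(𝒟)𝒟 + Ū·(M𝒟) + ½ Σ_Γ 𝒟_Γ (Ū·B_Γ Ū)` with `𝒜(𝒟) = Nᵀ K(𝒟)⁻¹ N`. -/
theorem dual_functional_value {n m : ℕ}
    (M : Matrix (Fin n) (Fin m) ℝ)
    (B : Fin m → Matrix (Fin n) (Fin n) ℝ)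
    (a : Matrix (Fin n) (Fin n) ℝ)
    (Ub : Fin n → ℝ)
    (ha : a.IsSymm) (hB : ∀ Γ, (B Γ).IsSymm)
    (D : Fin m → ℝ)
    (hK : IsUnit (a + ∑ Γ, D Γ • B Γ).det) :
    let K : Matrix (Fin n) (Fin n) ℝ := a + ∑ Γ, D Γ • B Γ
    let N : Matrix (Fin n) (Fin m) ℝ := Matrix.of fun I Γ => M I Γ + (B Γ *ᵥ Ub) I
    let U : Fin n → ℝ := Ub - K⁻¹ *ᵥ (N *ᵥ D)
    lag M B a Ub U D
      = -(1 / 2) * (D ⬝ᵥ ((Nᵀ * K⁻¹ * N) *ᵥ D))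
        + Ub ⬝ᵥ (M *ᵥ D)
        + (1 / 2) * ∑ Γ, D Γ * (Ub ⬝ᵥ (B Γ *ᵥ Ub)) := by
  intro K N U
  set S : Matrix (Fin n) (Fin n) ℝ := ∑ Γ, D Γ • B Γ with hSdef
  set V : Fin n → ℝ := K⁻¹ *ᵥ (N *ᵥ D) with hVdef
  have hS : S.IsSymm := by
    unfold Matrix.IsSymm
    rw [Matrix.transpose_sum]
    exact Finset.sum_congr rfl fun Γ _ => by rw [Matrix.transpose_smul, hB Γ]
  have hKsymm : K.IsSymm := by
    show (a + S)ᵀ = a + S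
    rw [Matrix.transpose_add, ha, hS]
  -- K V = N D
  have hKV : K *ᵥ V = N *ᵥ D := by
    rw [hVdef, Matrix.mulVec_mulVec, Matrix.mul_nonsing_inv K hK, Matrix.one_mulVec]
  -- N D = M D + S Ub
  have hND : N *ᵥ D = M *ᵥ D + S *ᵥ Ub := by
    rw [hSdef, sum_smul_mulVec]
    ext i
    simp only [Matrix.mulVec, dotProduct, Pi.add_apply, Finset.sum_apply,
      Pi.smul_apply, smul_eq_mul, N, Matrix.of_apply, add_mul]
    rw [← Finset.sum_add_distrib]
    exact Finset.sum_congr rfl fun Γ _ => by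
      simp [Matrix.mulVec, dotProduct, mul_comm]
  -- quadratic sum as S
  have hquad : ∀ x : Fin n → ℝ, ∑ Γ, D Γ * (x ⬝ᵥ (B Γ *ᵥ x)) = x ⬝ᵥ (S *ᵥ x) := by
    intro x
    rw [hSdef, sum_smul_mulVec, dot_sum]
    exact Finset.sum_congr rfl fun Γ _ => by
      rw [dotProduct_smul, smul_eq_mul]
  -- RHS quadratic form
  have hRHS : D ⬝ᵥ ((Nᵀ * K⁻¹ * N) *ᵥ D) = (N *ᵥ D) ⬝ᵥ V := by
    rw [Matrix.mul_assoc, ← Matrix.mulVec_mulVec, Matrix.dotProduct_mulVec,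
      Matrix.vecMul_transpose, hVdef, Matrix.mulVec_mulVec]
  have hU : U = Ub - V := rfl
  have hsub : U - Ub = -V := by rw [hU]; abel
  have hSsym : Ub ⬝ᵥ (S *ᵥ V) = V ⬝ᵥ (S *ᵥ Ub) := symm_dot hS Ub V
  have hVKV : V ⬝ᵥ (S *ᵥ V) + V ⬝ᵥ (a *ᵥ V) = (N *ᵥ D) ⬝ᵥ V := by
    have h1 : V ⬝ᵥ (K *ᵥ V) = (N *ᵥ D) ⬝ᵥ V := by
      rw [hKV, dotProduct_comm]
    rw [← h1, ← dotProduct_add, ← Matrix.add_mulVec, add_comm S a]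
  have hNDV : (N *ᵥ D) ⬝ᵥ V = V ⬝ᵥ (M *ᵥ D) + V ⬝ᵥ (S *ᵥ Ub) := by
    rw [dotProduct_comm, hND, dotProduct_add]
  unfold lag
  rw [hsub, hquad, hU, hRHS, hNDV]
  simp only [sub_dotProduct, Matrix.mulVec_sub, dotProduct_sub,
    neg_dotProduct, Matrix.mulVec_neg, dotProduct_neg, neg_neg]
  rw [hquad Ub]
  linarith [hSsym, hVKV]
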